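/- Fix b > 1 and let n ≥ 2. Define probability vectors π̃, π̃′ ∈ ℝ^n by: π̃_i = 1/(n + (b−1)⌈n/2⌉) for i ≤ ⌊n/2⌋ and π̃_i = b/(n + (b−1)⌈n/2⌉) for i > ⌊n/2⌋; and π̃′_i = b/(n + (b−1)⌈n/2⌉) for i ≤ ⌈n/2⌉ and π̃′_i = 1/(n + (b−1)⌈n/2⌉) for i > ⌈n/2⌉. Then ‖π̃ − π̃′‖ / (‖π̃‖ + ‖π̃′‖) ≥ (1/2)·(b−1)·√(n−1) / √(b²·⌈n/2⌉ + ⌊n/2⌋). -/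

import Mathlib

lemma sum_ite2_aux (a z w : ℝ) (k m n : ℕ) (hk : k ≤ m) (hm : m ≤ n) :
    ∑ i ∈ Finset.range n, (if i < k then a else if i < m then z else w)
      = k * a + ((m - k : ℕ) : ℝ) * z + ((n - m : ℕ) : ℝ) * w := by
  rw [Finset.range_eq_Ico, ← Finset.sum_Ico_consecutive _ (Nat.zero_le k) (hk.trans hm),
    ← Finset.sum_Ico_consecutive _ hk hm]
  have e1 : ∑ i ∈ Finset.Ico 0 k, (if i < k then a else if i < m then z else w)
      = k * a := by
    rw [Finset.sum_congr rfl (fun i hi => ?_), Finset.sum_const, Nat.card_Ico,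
      nsmul_eq_mul, Nat.sub_zero]
    simp only [Finset.mem_Ico] at hi
    simp [hi.2]
  have e2 : ∑ i ∈ Finset.Ico k m, (if i < k then a else if i < m then z else w)
      = ((m - k : ℕ) : ℝ) * z := by
    rw [Finset.sum_congr rfl (fun i hi => ?_), Finset.sum_const, Nat.card_Ico,
      nsmul_eq_mul]
    simp only [Finset.mem_Ico] at hi
    simp [Nat.not_lt.mpr hi.1, hi.2]
  have e3 : ∑ i ∈ Finset.Ico m n, (if i < k then a else if i < m then z else w)
      = ((n - m : ℕ) : ℝ) * w := by
    rw [Finset.sum_congr rfl (fun i hi => ?_), Finset.sum_const, Nat.card_Ico,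
      nsmul_eq_mul]
    simp only [Finset.mem_Ico] at hi
    simp [Nat.not_lt.mpr (hk.trans hi.1), Nat.not_lt.mpr hi.1]
  rw [e1, e2, e3]; ring

/-- For the half-low/half-high probability vectors π̃ and π̃′ with skew b > 1,
‖π̃ − π̃′‖ / (‖π̃‖ + ‖π̃′‖) ≥ (1/2)·(b−1)·√(n−1) / √(b²⌈n/2⌉ + ⌊n/2⌋). -/
theorem separation_of_flipped_vectors
    (b : ℝ) (hb : 1 < b) (n : ℕ) (hn : 2 ≤ n)
    (pi1 pi2 : EuclideanSpace ℝ (Fin n))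
    (hpi1 : ∀ i : Fin n, pi1 i =
      if (i : ℕ) < n / 2 then 1 / ((n : ℝ) + (b - 1) * ((n + 1) / 2 : ℕ))
      else b / ((n : ℝ) + (b - 1) * ((n + 1) / 2 : ℕ)))
    (hpi2 : ∀ i : Fin n, pi2 i =
      if (i : ℕ) < (n + 1) / 2 then b / ((n : ℝ) + (b - 1) * ((n + 1) / 2 : ℕ))
      else 1 / ((n : ℝ) + (b - 1) * ((n + 1) / 2 : ℕ))) :
    (1 / 2) * (b - 1) * Real.sqrt ((n : ℝ) - 1) /
        Real.sqrt (b ^ 2 * ((n + 1) / 2 : ℕ) + ((n / 2 : ℕ) : ℝ)) ≤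
      ‖pi1 - pi2‖ / (‖pi1‖ + ‖pi2‖) := by
  set f : ℕ := n / 2 with hf
  set c : ℕ := (n + 1) / 2 with hc
  set D : ℝ := (n : ℝ) + (b - 1) * c with hDdef
  set S : ℝ := b ^ 2 * (c : ℝ) + (f : ℝ) with hSdef
  have hfc : f ≤ c := Nat.div_le_div_right (Nat.le_succ n)
  have hcn : c ≤ n := by omega
  have hc1 : 1 ≤ c := by omega
  have hn2 : (2 : ℝ) ≤ (n : ℝ) := by exact_mod_cast hn
  have hD0 : 0 < D := by
    have h1 : (0:ℝ) ≤ (b - 1) * c := mul_nonneg (by linarith) (Nat.cast_nonneg c)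
    rw [hDdef]; linarith
  have hc1R : (1 : ℝ) ≤ (c : ℝ) := by exact_mod_cast hc1
  have hS0 : 0 < S := by
    rw [hSdef]
    have : (0:ℝ) ≤ (f : ℝ) := Nat.cast_nonneg f
    nlinarith
  have hsqS0 : 0 < Real.sqrt S := Real.sqrt_pos.mpr hS0
  have hnfc : (n - f : ℕ) = c := by omega
  have hncf : (n - c : ℕ) = f := by omega
  -- norm of pi1
  have hn1 : ‖pi1‖ = Real.sqrt S / D := by
    rw [EuclideanSpace.norm_eq]
    have hsum : ∑ i : Fin n, ‖pi1 i‖ ^ 2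
        = ∑ j ∈ Finset.range n,
            (if j < f then (1/D)^2 else if j < f then (1/D)^2 else (b/D)^2) := by
      rw [← Fin.sum_univ_eq_sum_range]
      refine Finset.sum_congr rfl fun i _ => ?_
      rw [hpi1 i, Real.norm_eq_abs, sq_abs, apply_ite (fun x : ℝ => x ^ 2)]
      by_cases h : (i : ℕ) < f <;> simp [h]
    rw [hsum, sum_ite2_aux _ _ _ f f n le_rfl (by omega), hnfc]
    have : (f : ℝ) * (1/D)^2 + ((f - f : ℕ) : ℝ) * (1/D)^2 + (c : ℝ) * (b/D)^2
        = S / D ^ 2 := by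
      simp only [Nat.sub_self, Nat.cast_zero, hSdef]
      field_simp
      ring
    rw [this, Real.sqrt_div hS0.le, Real.sqrt_sq hD0.le]
  -- norm of pi2
  have hn2' : ‖pi2‖ = Real.sqrt S / D := by
    rw [EuclideanSpace.norm_eq]
    have hsum : ∑ i : Fin n, ‖pi2 i‖ ^ 2
        = ∑ j ∈ Finset.range n,
            (if j < c then (b/D)^2 else if j < c then (b/D)^2 else (1/D)^2) := by
      rw [← Fin.sum_univ_eq_sum_range]
      refine Finset.sum_congr rfl fun i _ => ?_
      rw [hpi2 i, Real.norm_eq_abs, sq_abs, apply_ite (fun x : ℝ => x ^ 2)]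
      by_cases h : (i : ℕ) < c <;> simp [h]
    rw [hsum, sum_ite2_aux _ _ _ c c n le_rfl hcn, hncf]
    have : (c : ℝ) * (b/D)^2 + ((c - c : ℕ) : ℝ) * (b/D)^2 + (f : ℝ) * (1/D)^2
        = S / D ^ 2 := by
      simp only [Nat.sub_self, Nat.cast_zero, hSdef]
      field_simp
      ring
    rw [this, Real.sqrt_div hS0.le, Real.sqrt_sq hD0.le]
  -- lower bound on norm of the difference
  have hNlow : Real.sqrt ((n : ℝ) - 1) * (b - 1) / D ≤ ‖pi1 - pi2‖ := by
    rw [EuclideanSpace.norm_eq]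
    have hsum : ∑ i : Fin n, ‖(pi1 - pi2) i‖ ^ 2
        = ∑ j ∈ Finset.range n,
            (if j < f then ((b-1)/D)^2 else if j < c then 0 else ((b-1)/D)^2) := by
      rw [← Fin.sum_univ_eq_sum_range]
      refine Finset.sum_congr rfl fun i _ => ?_
      have : (pi1 - pi2) i = pi1 i - pi2 i := rfl
      rw [this, hpi1 i, hpi2 i, Real.norm_eq_abs, sq_abs]
      by_cases h1 : (i : ℕ) < f
      · have h2 : (i : ℕ) < c := lt_of_lt_of_le h1 hfc
        simp only [h1, h2, if_true]
        ring
      · by_cases h2 : (i : ℕ) < c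
        · simp [h1, h2]
        · simp only [h1, h2, if_false]
          ring
    rw [hsum, sum_ite2_aux _ _ _ f c n hfc hcn, hncf]
    have hkey : ((n : ℝ) - 1) * ((b-1)/D)^2
        ≤ (f : ℝ) * ((b-1)/D)^2 + ((c - f : ℕ) : ℝ) * 0 + (f : ℝ) * ((b-1)/D)^2 := by
      have hff : (n : ℝ) - 1 ≤ (f : ℝ) + (f : ℝ) := by
        have : n - 1 ≤ f + f := by omega
        have := (Nat.cast_le (α := ℝ)).mpr this
        push_cast [Nat.cast_sub (by omega : 1 ≤ n)] at this
        linarith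
      have hsq : (0:ℝ) ≤ ((b-1)/D)^2 := sq_nonneg _
      nlinarith
    calc Real.sqrt ((n : ℝ) - 1) * (b - 1) / D
        = Real.sqrt (((n : ℝ) - 1) * ((b-1)/D)^2) := by
          rw [Real.sqrt_mul (by linarith) , Real.sqrt_sq (div_nonneg (by linarith) hD0.le)]
          ring
      _ ≤ _ := Real.sqrt_le_sqrt hkey
  -- finish
  rw [hn1, hn2']
  have hden : Real.sqrt S / D + Real.sqrt S / D = 2 * Real.sqrt S / D := by ring
  rw [hden, div_le_div_iff₀ hsqS0 (by positivity)]
  calc (1/2) * (b - 1) * Real.sqrt ((n : ℝ) - 1) * (2 * Real.sqrt S / D)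
      = (Real.sqrt ((n : ℝ) - 1) * (b - 1) / D) * Real.sqrt S := by
        field_simp
    _ ≤ ‖pi1 - pi2‖ * Real.sqrt S :=
        mul_le_mul_of_nonneg_right hNlow (Real.sqrt_nonneg _)
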